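/- arXiv:2006.08372 — 2 statements merged into one kernel-verified Lean document; each statement's English description precedes it below -/
import Mathlib

section
/- Let k, d be positive integers, let f be an n-variable Boolean function with AI(f) = k, and let δ be a Boolean function with Hamming weight strictly less than min(2^{n-k}, 2^{d+1} - 1). Then |AI(f+δ) − AI(f)| ≤ d. -/
open scoped BigOperators

abbrev BF (n : ℕ) := (Fin n → ZMod 2) → ZMod 2

/-- Algebraic degree of a Boolean function: the least `d` such that `f` is
represented by a multivariate polynomial of total degree at most `d`. -/
noncomputable def degB {n : ℕ} (f : BF n) : ℕ :=
  sInf {d | ∃ p : MvPolynomial (Fin n) (ZMod 2),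
    (∀ x, MvPolynomial.eval x p = f x) ∧ p.totalDegree ≤ d}

/-- Fast algebraic immunity. -/
noncomputable def FAI {n : ℕ} (f : BF n) : ℕ :=
  sInf {m | ∃ g : BF n, g ≠ 1 ∧ f * g ≠ 0 ∧ m = degB g + degB (f * g)}

/-- Minimum degree of a nonzero annihilator. -/
noncomputable def LDA {n : ℕ} (f : BF n) : ℕ :=
  sInf {m | ∃ g : BF n, g ≠ 0 ∧ f * g = 0 ∧ m = degB g}

noncomputable def AI {n : ℕ} (f : BF n) : ℕ := min (LDA f) (LDA (1 + f))

noncomputable def muk {n : ℕ} (k : ℕ) (f : BF n) : ℕ :=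
  sInf {m | ∃ g : BF n, degB g ≤ k ∧ f * g ≠ 0 ∧ m = degB (f * g)}

def wtB {n : ℕ} (f : BF n) : ℕ := (Finset.univ.filter (fun x => f x = 1)).card

def IsAffineAut {n : ℕ} (A : (Fin n → ZMod 2) → (Fin n → ZMod 2)) : Prop :=
  ∃ (L : (Fin n → ZMod 2) ≃ₗ[ZMod 2] (Fin n → ZMod 2)) (b : Fin n → ZMod 2),
    ∀ x, A x = L x + b

noncomputable def RMcode (n e : ℕ) :
    Submodule (ZMod 2) ((Fin n → ZMod 2) → ZMod 2) :=
  Submodule.span (ZMod 2) {f | ∃ p : MvPolynomial (Fin n) (ZMod 2),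
    p.totalDegree ≤ e ∧ ∀ x, MvPolynomial.eval x p = f x}

/-- The code obtained by keeping only the coordinates in `S`
(i.e. puncturing on the complement of `S`). -/
noncomputable def restrictCode {n : ℕ}
    (C : Submodule (ZMod 2) ((Fin n → ZMod 2) → ZMod 2))
    (S : Set (Fin n → ZMod 2)) : Submodule (ZMod 2) (S → ZMod 2) :=
  C.map (LinearMap.funLeft (ZMod 2) (ZMod 2) (Subtype.val : S → (Fin n → ZMod 2)))

noncomputable def dualCode {ι : Type*} [Fintype ι]
    (C : Submodule (ZMod 2) (ι → ZMod 2)) : Submodule (ZMod 2) (ι → ZMod 2) where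
  carrier := {w | ∀ c ∈ C, ∑ i, w i * c i = 0}
  add_mem' := by
    intro a b ha hb c hc
    simp only [Pi.add_apply, add_mul, Finset.sum_add_distrib, ha c hc, hb c hc, add_zero]
  zero_mem' := by intro c hc; simp
  smul_mem' := by
    intro r a ha c hc
    simp only [Pi.smul_apply, smul_eq_mul, mul_assoc, ← Finset.mul_sum, ha c hc, mul_zero]

noncomputable instance instFintypeSubsetBF {α : Type*} [Fintype α] (S : Set α) :
    Fintype ↥S := Fintype.ofFinite _

def suppB {n : ℕ} (f : BF n) : Set (Fin n → ZMod 2) := {x | f x = 1}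

/-!
Let `g` be an annihilator of `f` (or of `1 + f`) of degree `AI f`. A nonzero function of degree
`r` has weight at least `2^(n-r)`, so `g` is `1` at some point `x₀` outside the support of `δ`.
Since `wt δ ≤ 2^(d+1) - 2`, an averaging argument over the affine hyperplanes through `x₀` gives
an affine form vanishing at more than half of the support of `δ` and equal to `1` at `x₀`;
iterating, a product `h` of `d` such forms is `1` at `x₀` and vanishes on the support of `δ`.
Then `g * h ≠ 0` annihilates `f + δ`, so `AI (f + δ) ≤ AI f + d`, and applying this to `f + δ`
gives the reverse inequality.

The weight bound comes from the same interpolation: if `wt g < 2^(n-r)`, some `h` of degree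
`< n - r` makes `g * h` the indicator of a point, which has odd sum over `𝔽₂ⁿ`, whereas every
function of degree `< n` sums to zero (Chevalley–Warning).
-/

open Finset MvPolynomial

section BooleanFunctions

variable {n : ℕ}

lemma zmod_two_eq_zero_or_one (y : ZMod 2) : y = 0 ∨ y = 1 := by
  revert y; decide

lemma exists_eq_one_of_ne_zero {g : BF n} (hg : g ≠ 0) : ∃ x, g x = 1 := by
  by_contra! h
  exact hg (funext fun x => (zmod_two_eq_zero_or_one _).resolve_right (h x))

lemma exists_eval_eq (f : BF n) : ∃ p : MvPolynomial (Fin n) (ZMod 2), ∀ x, eval x p = f x := by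
  obtain ⟨p, -, hp⟩ :=
    (map_restrict_dom_evalₗ (ZMod 2) (Fin n)).ge (Submodule.mem_top (x := f))
  exact ⟨p, fun x => congrFun hp x⟩

lemma degB_le_totalDegree {f : BF n} (p : MvPolynomial (Fin n) (ZMod 2))
    (hp : ∀ x, eval x p = f x) : degB f ≤ p.totalDegree :=
  Nat.sInf_le ⟨p, hp, le_rfl⟩

lemma exists_eval_eq_totalDegree_le (f : BF n) :
    ∃ p : MvPolynomial (Fin n) (ZMod 2),
      (∀ x, eval x p = f x) ∧ p.totalDegree ≤ degB f := by
  obtain ⟨p, hp⟩ := exists_eval_eq f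
  exact Nat.sInf_mem (s := {d | ∃ p : MvPolynomial (Fin n) (ZMod 2),
    (∀ x, eval x p = f x) ∧ p.totalDegree ≤ d}) ⟨p.totalDegree, p, hp, le_rfl⟩

lemma degB_one : degB (1 : BF n) = 0 :=
  Nat.le_zero.mp <| (degB_le_totalDegree 1 fun x => by simp).trans_eq totalDegree_one

lemma degB_mul_le (f g : BF n) : degB (f * g) ≤ degB f + degB g := by
  obtain ⟨p, hp, hpf⟩ := exists_eval_eq_totalDegree_le f
  obtain ⟨q, hq, hqg⟩ := exists_eval_eq_totalDegree_le g
  calc degB (f * g) ≤ (p * q).totalDegree := degB_le_totalDegree _ fun x => by simp [hp, hq]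
    _ ≤ p.totalDegree + q.totalDegree := totalDegree_mul p q
    _ ≤ degB f + degB g := add_le_add hpf hqg

lemma degB_affine_le_one (a : Fin n → ZMod 2) (c : ZMod 2) :
    degB (fun x => a ⬝ᵥ x + c) ≤ 1 := by
  refine (degB_le_totalDegree (∑ i, a i • X i + C c) fun x => by simp [dotProduct]).trans ?_
  refine (totalDegree_add _ _).trans (max_le ?_ (by simp))
  exact totalDegree_finsetSum_le fun i _ => (totalDegree_smul_le _ _).trans (totalDegree_X i).le

lemma sum_eq_zero_of_degB_lt {g : BF n} (hg : degB g < n) : ∑ x, g x = 0 := by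
  obtain ⟨p, hp, hpg⟩ := exists_eval_eq_totalDegree_le g
  simp_rw [← hp]
  exact p.sum_eval_eq_zero (by simpa using hpg.trans_lt hg)

lemma two_mul_card_dotProduct_eq_one {v : Fin n → ZMod 2} (hv : v ≠ 0) :
    2 * #{a | a ⬝ᵥ v = 1} = 2 ^ n := by
  obtain ⟨j, hj⟩ := Function.ne_iff.mp hv
  have hshift : ∀ a, (a + Pi.single j 1) ⬝ᵥ v = a ⬝ᵥ v + 1 := fun a => by
    rw [add_dotProduct, single_dotProduct, one_mul, (zmod_two_eq_zero_or_one _).resolve_left hj]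
  have hswap : #{a | a ⬝ᵥ v = 1} = #{a | ¬ a ⬝ᵥ v = 1} :=
    card_equiv (Equiv.addRight (Pi.single j 1)) fun a => by
      simp only [mem_filter, mem_univ, true_and, Equiv.coe_addRight, hshift]
      rcases zmod_two_eq_zero_or_one (a ⬝ᵥ v) with h | h <;> simp [h]
  have hsplit := card_filter_add_card_filter_not (s := univ) (fun a => a ⬝ᵥ v = 1)
  simp only [card_univ, Fintype.card_pi, ZMod.card, prod_const, Fintype.card_fin] at hsplit
  omega

lemma exists_card_lt_two_mul_card_dotProduct_sub_eq_one {x₀ : Fin n → ZMod 2}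
    {T : Finset (Fin n → ZMod 2)} (hx₀ : x₀ ∉ T) (hT : T.Nonempty) :
    ∃ a : Fin n → ZMod 2, #T < 2 * #{t ∈ T | a ⬝ᵥ (t - x₀) = 1} := by
  by_contra! h
  have hcount : ∑ a, 2 * #{t ∈ T | a ⬝ᵥ (t - x₀) = 1} = ∑ _a : Fin n → ZMod 2, #T :=
    calc ∑ a, 2 * #{t ∈ T | a ⬝ᵥ (t - x₀) = 1}
        = ∑ t ∈ T, 2 * #{a | a ⬝ᵥ (t - x₀) = 1} := by
          rw [← mul_sum, ← mul_sum]
          congr 1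
          exact sum_card_bipartiteAbove_eq_sum_card_bipartiteBelow
            (fun a t => a ⬝ᵥ (t - x₀) = 1)
      _ = ∑ _t ∈ T, 2 ^ n := sum_congr rfl fun t ht =>
          two_mul_card_dotProduct_eq_one (sub_ne_zero.mpr (ne_of_mem_of_not_mem ht hx₀))
      _ = ∑ _a : Fin n → ZMod 2, #T := by simp [mul_comm]
  refine hcount.not_lt (sum_lt_sum (fun a _ => h a) ⟨0, mem_univ _, ?_⟩)
  simpa using hT.card_pos

lemma exists_degB_le_separating {x₀ : Fin n → ZMod 2} {d : ℕ} {T : Finset (Fin n → ZMod 2)}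
    (hx₀ : x₀ ∉ T) (hT : #T + 2 ≤ 2 ^ (d + 1)) :
    ∃ h : BF n, degB h ≤ d ∧ h x₀ = 1 ∧ ∀ t ∈ T, h t = 0 := by
  induction d generalizing T with
  | zero =>
    have hT0 : T = ∅ := card_eq_zero.mp (by simpa using hT)
    exact ⟨1, degB_one.le, rfl, by simp [hT0]⟩
  | succ d ih =>
    rcases T.eq_empty_or_nonempty with rfl | hTne
    · exact ⟨1, degB_one.trans_le (Nat.zero_le _), rfl, by simp⟩
    obtain ⟨a, ha⟩ := exists_card_lt_two_mul_card_dotProduct_sub_eq_one hx₀ hTne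
    have hT' : #{t ∈ T | ¬a ⬝ᵥ (t - x₀) = 1} + 2 ≤ 2 ^ (d + 1) := by
      have := card_filter_add_card_filter_not (s := T) (fun t => a ⬝ᵥ (t - x₀) = 1)
      rw [pow_succ] at hT
      omega
    obtain ⟨h, hd, hx₀h, hT'h⟩ := ih (fun hx => hx₀ (mem_filter.mp hx).1) hT'
    -- the affine factor is `1` at `x₀` and kills the points of `T` with `a ⬝ᵥ (t - x₀) = 1`
    have hℓ : ∀ x, a ⬝ᵥ x + (1 - a ⬝ᵥ x₀) = a ⬝ᵥ (x - x₀) + 1 := fun x => by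
      rw [dotProduct_sub]; ring
    refine ⟨(fun x => a ⬝ᵥ x + (1 - a ⬝ᵥ x₀)) * h, ?_, ?_, fun t ht => ?_⟩
    · calc _ ≤ 1 + d := (degB_mul_le _ _).trans (add_le_add (degB_affine_le_one _ _) hd)
        _ = d + 1 := add_comm ..
    · simp [hℓ, hx₀h]
    · by_cases hat : a ⬝ᵥ (t - x₀) = 1
      · simp only [Pi.mul_apply, hℓ, hat]
        simp [CharTwo.add_self_eq_zero]
      · simp [hT'h t (mem_filter.mpr ⟨ht, hat⟩)]

lemma two_pow_sub_degB_le_wtB {g : BF n} (hg : g ≠ 0) : 2 ^ (n - degB g) ≤ wtB g := by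
  by_contra! hlt
  obtain ⟨x₀, hx₀⟩ := exists_eq_one_of_ne_zero hg
  have hwt : #(({x | g x = 1} : Finset _).erase x₀) + 1 = wtB g :=
    card_erase_add_one (mem_filter.mpr ⟨mem_univ _, hx₀⟩)
  obtain ⟨d, hd⟩ : ∃ d, n - degB g = d + 1 :=
    Nat.exists_eq_add_one_of_ne_zero fun h0 => by rw [h0] at hlt; omega
  obtain ⟨h, hdh, hx₀h, hh⟩ := exists_degB_le_separating (d := d)
    (T := ({x | g x = 1} : Finset _).erase x₀) (notMem_erase x₀ _) (by rw [hd] at hlt; omega)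
  -- `g * h` is the indicator of `x₀`, yet has degree `< n`
  have hsum : ∑ x, (g * h) x = 1 := by
    rw [sum_eq_single x₀ (fun x _ hx => ?_) (by simp)]
    · simp [hx₀, hx₀h]
    rcases zmod_two_eq_zero_or_one (g x) with hgx | hgx
    · simp [hgx]
    · simp [hh x (mem_erase.mpr ⟨hx, mem_filter.mpr ⟨mem_univ _, hgx⟩⟩)]
  exact one_ne_zero <| hsum.symm.trans <|
    sum_eq_zero_of_degB_lt <| (degB_mul_le g h).trans_lt (by omega)

lemma LDA_le_degB {F g : BF n} (hg : g ≠ 0) (hFg : F * g = 0) : LDA F ≤ degB g :=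
  Nat.sInf_le ⟨g, hg, hFg, rfl⟩

lemma LDA_zero : LDA (0 : BF n) = 0 :=
  Nat.le_zero.mp <| (LDA_le_degB one_ne_zero (zero_mul 1)).trans_eq degB_one

lemma exists_annihilator_degB_eq_LDA {F : BF n} (hF : F ≠ 1) :
    ∃ g : BF n, g ≠ 0 ∧ F * g = 0 ∧ degB g = LDA F := by
  have h1F : 1 + F ≠ 0 := fun h => hF (CharTwo.add_eq_zero.mp h).symm
  have hF1F : F * (1 + F) = 0 := by
    funext x
    rcases zmod_two_eq_zero_or_one (F x) with h | h <;> simp [h, CharTwo.add_self_eq_zero]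
  obtain ⟨g, hg, hFg, hdeg⟩ :=
    Nat.sInf_mem (s := {m | ∃ g : BF n, g ≠ 0 ∧ F * g = 0 ∧ m = degB g})
      ⟨_, 1 + F, h1F, hF1F, rfl⟩
  exact ⟨g, hg, hFg, hdeg.symm⟩

lemma LDA_add_le {F δ : BF n} {d : ℕ} (hF : F ≠ 1) (hδF : wtB δ < 2 ^ (n - LDA F))
    (hδd : wtB δ + 2 ≤ 2 ^ (d + 1)) : LDA (F + δ) ≤ LDA F + d := by
  obtain ⟨g, hg, hFg, hdeg⟩ := exists_annihilator_degB_eq_LDA hF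
  obtain ⟨x₀, hgx₀, hδx₀⟩ : ∃ x₀, g x₀ = 1 ∧ δ x₀ ≠ 1 := by
    by_contra! h
    have hgδ : wtB g ≤ wtB δ := card_le_card fun x hx => by simpa using h x (by simpa using hx)
    have := two_pow_sub_degB_le_wtB hg
    rw [hdeg] at this
    omega
  obtain ⟨h, hdh, hx₀h, hδh⟩ :=
    exists_degB_le_separating (T := {x | δ x = 1}) (by simpa using hδx₀) hδd
  have hgh : g * h ≠ 0 := fun h0 => by simpa [hgx₀, hx₀h] using congrFun h0 x₀
  have hann : (F + δ) * (g * h) = 0 := by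
    funext x
    rcases zmod_two_eq_zero_or_one (δ x) with hδ | hδ
    · simpa [hδ, mul_assoc] using congrArg (· * h x) (congrFun hFg x)
    · simp [hδh x (by simpa using hδ)]
  calc LDA (F + δ) ≤ degB (g * h) := LDA_le_degB hgh hann
    _ ≤ degB g + degB h := degB_mul_le g h
    _ ≤ LDA F + d := by omega

lemma exists_LDA_eq_AI (f : BF n) : ∃ F, (F = f ∨ F = 1 + f) ∧ F ≠ 1 ∧ LDA F = AI f := by
  by_cases hf : f = 1
  · subst hf
    refine ⟨0, Or.inr (CharTwo.add_self_eq_zero _).symm, zero_ne_one, ?_⟩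
    simp [AI, LDA_zero, CharTwo.add_self_eq_zero]
  by_cases h1f : 1 + f = 1
  · obtain rfl : f = 0 := add_eq_left.mp h1f
    exact ⟨0, Or.inl rfl, hf, by simp [AI, LDA_zero]⟩
  rcases min_choice (LDA f) (LDA (1 + f)) with h | h
  · exact ⟨f, Or.inl rfl, hf, h.symm⟩
  · exact ⟨1 + f, Or.inr rfl, h1f, h.symm⟩

lemma AI_add_le {f δ : BF n} {d : ℕ} (hδf : wtB δ < 2 ^ (n - AI f))
    (hδd : wtB δ + 2 ≤ 2 ^ (d + 1)) : AI (f + δ) ≤ AI f + d := by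
  obtain ⟨F, rfl | rfl, hF, hFf⟩ := exists_LDA_eq_AI f
  · rw [← hFf] at hδf ⊢
    exact (min_le_left _ _).trans (LDA_add_le hF hδf hδd)
  · rw [← hFf] at hδf ⊢
    calc AI (f + δ) ≤ LDA (1 + f + δ) := add_assoc 1 f δ ▸ min_le_right _ _
      _ ≤ LDA (1 + f) + d := LDA_add_le hF hδf hδd

end BooleanFunctions

theorem stmt8_general {n k d : ℕ} (f δ : BF n)
    (hAI : AI f = k)
    (hw : wtB δ < min (2 ^ (n - k)) (2 ^ (d + 1) - 1)) :
    |(AI (f + δ) : ℤ) - (AI f : ℤ)| ≤ d := by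
  subst hAI
  have hδf : wtB δ < 2 ^ (n - AI f) := (lt_min_iff.mp hw).1
  have hδd : wtB δ + 2 ≤ 2 ^ (d + 1) := by have := (lt_min_iff.mp hw).2; omega
  have hup : AI (f + δ) ≤ AI f + d := AI_add_le hδf hδd
  have hdown : AI f ≤ AI (f + δ) + d := by
    by_cases! hle : AI f ≤ AI (f + δ)
    · omega
    have hδfδ : wtB δ < 2 ^ (n - AI (f + δ)) :=
      hδf.trans_le (Nat.pow_le_pow_right two_pos (by omega))
    simpa [add_assoc, CharTwo.add_self_eq_zero] using AI_add_le hδfδ hδd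
  rw [abs_le]
  constructor <;> omega

theorem stmt8 {n k d : ℕ} (hk : 1 ≤ k) (hd : 1 ≤ d) (f δ : BF n)
    (hAI : AI f = k)
    (hw : wtB δ < min (2 ^ (n - k)) (2 ^ (d + 1) - 1)) :
    |(AI (f + δ) : ℤ) - (AI f : ℤ)| ≤ d :=
  stmt8_general f δ hAI hw
end

section
/- Let e be a positive integer, f an n-variable Boolean function with support D ⊆ F_2^n. Then AI(f) > e if and only if the punctured Reed–Muller codes RM(e,n)^D and RM(e,n)^{D̄} (obtained by deleting the coordinates in D, respectively in the complement D̄ of D) both have dimension equal to dim RM(e,n) = Σ_{i=0}^{e} C(n,i). -/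
open scoped BigOperators

/-!
Restricting a code `C` to the coordinates in `S` preserves its dimension iff no nonzero codeword
vanishes on `S`. A nonzero `g ∈ RM(e,n)` vanishing on `supp h` is the same thing as a nonzero
annihilator of `h` of degree `≤ e`, so the two restrictions have full dimension iff neither `f`
nor `1 + f` has such an annihilator, i.e. iff `e < AI f`. The dimension of `RM(e,n)` is
`∑_{i ≤ e} C(n,i)`: since `x ^ k = x` on `ZMod 2`, the code is the image under evaluation of the
span of the squarefree monomials of degree `≤ e`, on which evaluation is injective.
-/

open MvPolynomial

section Squarefree

variable {σ : Type*} [DecidableEq σ]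

noncomputable def squarefreeExponent (S : Finset σ) : σ →₀ ℕ := Multiset.toFinsupp S.val

@[simp]
lemma support_squarefreeExponent (S : Finset σ) : (squarefreeExponent S).support = S := by
  simp [squarefreeExponent]

lemma squarefreeExponent_apply (S : Finset σ) (i : σ) :
    squarefreeExponent S i = if i ∈ S then 1 else 0 :=
  Multiset.count_eq_of_nodup S.nodup

lemma sum_squarefreeExponent (S : Finset σ) :
    ((squarefreeExponent S).sum fun _ k => k) = S.card :=
  Multiset.toFinsupp_sum_eq S.val

lemma squarefreeExponent_injective : Function.Injective (squarefreeExponent (σ := σ)) :=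
  Multiset.toFinsupp.injective.comp Finset.val_injective

end Squarefree

lemma eval_monomial_zmod_two {σ : Type*} (x : σ → ZMod 2) (s : σ →₀ ℕ) (c : ZMod 2) :
    eval x (monomial s c) = c * ∏ i ∈ s.support, x i := by
  have idem : ∀ a : ZMod 2, IsIdempotentElem a := by unfold IsIdempotentElem; decide
  rw [eval_monomial, Finsupp.prod]
  exact congrArg (c * ·) (Finset.prod_congr rfl fun i hi =>
    (idem (x i)).pow_eq (Finsupp.mem_support_iff.mp hi))

lemma card_finset_card_le (α : Type*) [Fintype α] (e : ℕ) :
    Nat.card {S : Finset α // S.card ≤ e} =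
      ∑ i ∈ Finset.range (e + 1), (Fintype.card α).choose i := by
  classical
  rw [Nat.card_eq_fintype_card, Fintype.card_subtype,
    Finset.card_eq_sum_card_fiberwise (f := Finset.card) (t := Finset.range (e + 1))
      (fun S hS => by simpa [Nat.lt_succ_iff] using hS)]
  refine Finset.sum_congr rfl fun i hi => ?_
  rw [← Finset.card_univ, ← Finset.card_powersetCard, Finset.filter_filter]
  congr 1
  ext S
  simp only [Finset.mem_filter, Finset.mem_univ, true_and, Finset.mem_powersetCard_univ]
  simp only [Finset.mem_range] at hi
  omega

section Multilinear

variable (R σ : Type*) [CommSemiring R] [DecidableEq σ] (e : ℕ)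

def squarefreeExponents : Set (σ →₀ ℕ) :=
  Set.range fun S : {S : Finset σ // S.card ≤ e} => squarefreeExponent S.1

noncomputable def multilinearPolys : Submodule R (MvPolynomial σ R) :=
  restrictSupport R (squarefreeExponents σ e)

lemma multilinearPolys_le_restrictDegree : multilinearPolys R σ e ≤ restrictDegree σ R 1 := by
  refine restrictSupport_mono R ?_
  rintro _ ⟨S, rfl⟩ i
  simp only [squarefreeExponent_apply]
  split_ifs <;> omega

lemma multilinearPolys_le_restrictTotalDegree :
    multilinearPolys R σ e ≤ restrictTotalDegree σ R e := by
  refine restrictSupport_mono R ?_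
  rintro _ ⟨S, rfl⟩
  exact (sum_squarefreeExponent S.1).trans_le S.2

instance [Finite σ] : Finite (squarefreeExponents σ e) :=
  (Set.finite_range _).to_subtype

instance [Finite σ] : Module.Finite R (multilinearPolys R σ e) :=
  Module.Finite.of_basis (basisRestrictSupport R _)

lemma finrank_multilinearPolys [Fintype σ] [StrongRankCondition R] :
    Module.finrank R (multilinearPolys R σ e) =
      ∑ i ∈ Finset.range (e + 1), (Fintype.card σ).choose i := by
  rw [multilinearPolys, Module.finrank_eq_nat_card_basis (basisRestrictSupport R _),
    squarefreeExponents, ← Nat.card_congr (Equiv.ofInjective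
      (fun S : {S : Finset σ // S.card ≤ e} => squarefreeExponent S.1)
      (squarefreeExponent_injective.comp Subtype.val_injective)), card_finset_card_le]

end Multilinear

lemma map_evalₗ_multilinearPolys (σ : Type*) [DecidableEq σ] (e : ℕ) :
    (multilinearPolys (ZMod 2) σ e).map (evalₗ (ZMod 2) σ) =
      (restrictTotalDegree σ (ZMod 2) e).map (evalₗ (ZMod 2) σ) := by
  refine le_antisymm (Submodule.map_mono (multilinearPolys_le_restrictTotalDegree _ σ e)) ?_
  rw [restrictTotalDegree, restrictSupport_eq_span, Submodule.map_span, Submodule.span_le]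
  rintro _ ⟨_, ⟨s, hs, rfl⟩, rfl⟩
  have hcard : s.support.card ≤ e := by
    rw [Finset.card_eq_sum_ones]
    exact le_trans (Finset.sum_le_sum fun i hi =>
      Nat.one_le_iff_ne_zero.mpr (Finsupp.mem_support_iff.mp hi)) hs
  refine ⟨monomial (squarefreeExponent s.support) 1, ?_, ?_⟩
  · exact (monomial_mem_restrictSupport (R := ZMod 2)).mpr
      (Or.inl ⟨⟨s.support, hcard⟩, rfl⟩)
  · funext x
    simp only [evalₗ_apply, eval_monomial_zmod_two, support_squarefreeExponent]

lemma disjoint_multilinearPolys_ker_evalₗ (σ : Type) [Finite σ] [DecidableEq σ] (e : ℕ) :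
    Disjoint (multilinearPolys (ZMod 2) σ e) (LinearMap.ker (evalₗ (ZMod 2) σ)) := by
  refine Submodule.disjoint_def.mpr fun p hp hker => ?_
  refine eq_zero_of_eval_eq_zero σ (ZMod 2) p (fun v => congrFun hker v) ?_
  rw [ZMod.card]
  exact multilinearPolys_le_restrictDegree _ σ e hp

lemma Submodule.finrank_map_eq_iff_disjoint_ker {K V W : Type*} [DivisionRing K]
    [AddCommGroup V] [Module K V] [AddCommGroup W] [Module K W] (L : Submodule K V)
    [Module.Finite K L] (f : V →ₗ[K] W) :
    Module.finrank K (L.map f) = Module.finrank K L ↔ Disjoint L (LinearMap.ker f) := by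
  refine ⟨fun h => disjoint_ker_of_finrank_le f h.ge, fun h => ?_⟩
  rw [← LinearMap.range_domRestrict]
  exact LinearMap.finrank_range_of_inj (LinearMap.injective_domRestrict_iff.mpr h)

section ReedMuller

variable (n e : ℕ)

lemma RMcode_eq_map :
    RMcode n e = (multilinearPolys (ZMod 2) (Fin n) e).map (evalₗ (ZMod 2) (Fin n)) := by
  have hgen : {f : BF n | ∃ p : MvPolynomial (Fin n) (ZMod 2),
      p.totalDegree ≤ e ∧ ∀ x, eval x p = f x} =
      (restrictTotalDegree (Fin n) (ZMod 2) e).map (evalₗ (ZMod 2) (Fin n)) := by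
    ext g
    simp only [Set.mem_ofPred_eq, SetLike.mem_coe, Submodule.mem_map, mem_restrictTotalDegree,
      funext_iff, evalₗ_apply]
  rw [map_evalₗ_multilinearPolys, RMcode, hgen, Submodule.span_eq]

lemma finrank_RMcode :
    Module.finrank (ZMod 2) (RMcode n e) = ∑ i ∈ Finset.range (e + 1), n.choose i := by
  rw [RMcode_eq_map, (Submodule.finrank_map_eq_iff_disjoint_ker _ _).mpr
    (disjoint_multilinearPolys_ker_evalₗ _ e), finrank_multilinearPolys, Fintype.card_fin]

lemma one_mem_RMcode : (1 : BF n) ∈ RMcode n e :=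
  Submodule.subset_span ⟨1, by simp, fun x => by simp⟩

lemma degB_le_iff_mem_RMcode (g : BF n) : degB g ≤ e ↔ g ∈ RMcode n e := by
  constructor
  · intro hg
    obtain ⟨p₀, -, hp₀⟩ :=
      (map_restrict_dom_evalₗ (ZMod 2) (Fin n)).ge (Submodule.mem_top (x := g))
    obtain ⟨p, hp, hdeg⟩ := Nat.sInf_mem (s := {d | ∃ p : MvPolynomial (Fin n) (ZMod 2),
        (∀ x, eval x p = g x) ∧ p.totalDegree ≤ d}) ⟨_, p₀, congrFun hp₀, le_rfl⟩
    exact Submodule.subset_span ⟨p, hdeg.trans hg, hp⟩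
  · intro hg
    rw [RMcode_eq_map] at hg
    obtain ⟨q, hq, rfl⟩ := hg
    exact Nat.sInf_le ⟨q, fun x => rfl,
      (mem_restrictTotalDegree _ _ _).mp (multilinearPolys_le_restrictTotalDegree _ _ e hq)⟩

lemma finrank_restrictCode_eq_iff (C : Submodule (ZMod 2) (BF n)) (S : Set (Fin n → ZMod 2)) :
    Module.finrank (ZMod 2) (restrictCode C S) = Module.finrank (ZMod 2) C ↔
      ∀ g ∈ C, Set.EqOn g 0 S → g = 0 := by
  rw [restrictCode, Submodule.finrank_map_eq_iff_disjoint_ker, Submodule.disjoint_def]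
  simp only [LinearMap.mem_ker, funext_iff, LinearMap.funLeft_apply, Set.EqOn, Subtype.forall]
  rfl

end ReedMuller

section Annihilator

variable {n : ℕ}

lemma mul_eq_zero_iff_eqOn_suppB (h g : BF n) : h * g = 0 ↔ Set.EqOn g 0 (suppB h) := by
  have key : ∀ a b : ZMod 2, a * b = 0 ↔ (a = 1 → b = 0) := by decide
  simp only [funext_iff, Pi.mul_apply, Pi.zero_apply, key, Set.EqOn, suppB, Set.mem_ofPred_eq]

lemma suppB_zero : suppB (0 : BF n) = ∅ := by
  ext x
  simp [suppB]

lemma suppB_one_add (f : BF n) : suppB (1 + f) = (suppB f)ᶜ := by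
  have key : ∀ a : ZMod 2, 1 + a = 1 ↔ a ≠ 1 := by decide
  ext x
  exact key (f x)

lemma LDA_le {f g : BF n} (hg : g ≠ 0) (hfg : f * g = 0) : LDA f ≤ degB g :=
  Nat.sInf_le ⟨g, hg, hfg, rfl⟩

lemma exists_degB_eq_LDA {f : BF n} (hf : f ≠ 1) :
    ∃ g : BF n, g ≠ 0 ∧ f * g = 0 ∧ degB g = LDA f := by
  have hann : f * (1 + f) = 0 := by
    funext x
    have key : ∀ a : ZMod 2, a * (1 + a) = 0 := by decide
    exact key (f x)
  have hne : 1 + f ≠ 0 := fun h => hf ((add_eq_zero_iff_eq_neg'.mp h).trans (CharTwo.neg_eq 1))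
  obtain ⟨g, hg, hfg, hdeg⟩ := Nat.sInf_mem (⟨_, 1 + f, hne, hann, rfl⟩ :
    {m | ∃ g : BF n, g ≠ 0 ∧ f * g = 0 ∧ m = degB g}.Nonempty)
  exact ⟨g, hg, hfg, hdeg.symm⟩

lemma lt_LDA_iff (e : ℕ) {h : BF n} (hh : h ≠ 1) :
    e < LDA h ↔ ∀ g ∈ RMcode n e, Set.EqOn g 0 (suppB h) → g = 0 := by
  constructor
  · intro hlt g hg hvan
    by_contra hg0
    have := LDA_le hg0 ((mul_eq_zero_iff_eqOn_suppB h g).mpr hvan)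
    have := (degB_le_iff_mem_RMcode n e g).mpr hg
    omega
  · intro H
    obtain ⟨g, hg0, hhg, hdeg⟩ := exists_degB_eq_LDA hh
    by_contra hle
    exact hg0 (H g ((degB_le_iff_mem_RMcode n e g).mp (by omega))
      ((mul_eq_zero_iff_eqOn_suppB h g).mp hhg))

end Annihilator

theorem stmt13_general {n : ℕ} (e : ℕ) (f : BF n) :
    e < AI f ↔
      (Module.finrank (ZMod 2) (restrictCode (RMcode n e) (suppB f)ᶜ) =
          ∑ i ∈ Finset.range (e + 1), n.choose i ∧
        Module.finrank (ZMod 2) (restrictCode (RMcode n e) (suppB f)) =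
          ∑ i ∈ Finset.range (e + 1), n.choose i) := by
  have hempty : ¬ ∀ g ∈ RMcode n e, Set.EqOn g 0 ∅ → g = 0 := fun h =>
    one_ne_zero (h 1 (one_mem_RMcode n e) (Set.eqOn_empty _ _))
  have hLDA_zero : ¬ e < LDA (0 : BF n) := by rwa [lt_LDA_iff e zero_ne_one, suppB_zero]
  rw [AI, lt_min_iff, ← finrank_RMcode n e, finrank_restrictCode_eq_iff,
    finrank_restrictCode_eq_iff, ← suppB_one_add]
  by_cases hf1 : f = 1
  · rw [show 1 + f = 0 by rw [hf1]; exact CharTwo.add_self_eq_zero 1, suppB_zero]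
    exact iff_of_false (fun h => hLDA_zero h.2) (fun h => hempty h.1)
  by_cases hf0 : f = 0
  · rw [hf0, suppB_zero]
    exact iff_of_false (fun h => hLDA_zero h.1) (fun h => hempty h.2)
  rw [lt_LDA_iff e hf1, lt_LDA_iff e (add_eq_left.not.mpr hf0)]
  exact and_comm

theorem stmt13 {n : ℕ} (e : ℕ) (he : 1 ≤ e) (f : BF n) :
    e < AI f ↔
      (Module.finrank (ZMod 2) (restrictCode (RMcode n e) (suppB f)ᶜ) =
          ∑ i ∈ Finset.range (e + 1), n.choose i ∧
        Module.finrank (ZMod 2) (restrictCode (RMcode n e) (suppB f)) =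
          ∑ i ∈ Finset.range (e + 1), n.choose i) :=
  stmt13_general e f
end
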